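/- Let p be an odd prime, γ ≥ 1, χ a primitive Dirichlet character modulo p^γ, and ν an integer with 1 ≤ ν ≤ γ/2. Let u, v, w be integers with gcd(uw, p) = 1. Then the sum over residues a₀ modulo p^ν with gcd(a₀, p) = 1 of χ(u + v·w·a₀·p^{γ-ν}) equals: χ(u)·p^{ν-1}(p-1) if p^ν | v; equals −χ(u)·p^{ν-1} if p^{ν-1} exactly divides v (i.e., p^{ν-1} | v but p^ν ∤ v); and equals 0 otherwise. -/

import Mathlib

open Finset

/-- Reindexing a sum over `range n` as a sum over `ZMod n`. -/
private lemma aux_reindex (n : ℕ) [NeZero n] (g : ℤ → ℂ) :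
    ∑ x : ZMod n, g ((x.val : ℤ)) = ∑ a ∈ Finset.range n, g a := by
  refine Finset.sum_nbij' (fun x => x.val) (fun a => (a : ZMod n)) ?_ ?_ ?_ ?_ ?_
  · intro x _; exact Finset.mem_range.mpr (ZMod.val_lt x)
  · intro a _; exact Finset.mem_univ _
  · intro x _; exact ZMod.natCast_rightInverse x
  · intro a ha; exact ZMod.val_natCast_of_lt (Finset.mem_range.mp ha)
  · intro x _; rfl

/-- The full character sum over `range (p^μ)` when the character is trivial. -/
private lemma aux_sum_triv (p ν μ : ℕ) (hp : p.Prime) (f : ℤ → ℂ)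
    (hcong : ∀ x y : ℤ, (p : ℤ)^ν ∣ x - y → f x = f y)
    (m : ℤ) (hper : (p : ℤ)^ν ∣ m * (p : ℤ)^μ)
    (htriv : ∀ a : ℤ, f (m * a) = 1) :
    ∑ a ∈ Finset.range (p^μ), f (m * a) = (p : ℂ)^μ := by
  calc ∑ a ∈ Finset.range (p^μ), f (m * a) = ∑ a ∈ Finset.range (p^μ), (1 : ℂ) := by
        refine Finset.sum_congr rfl fun a _ => htriv a
    _ = (p : ℂ)^μ := by
        rw [Finset.sum_const, Finset.card_range, nsmul_eq_mul, mul_one]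
        push_cast
        ring

/-- The full character sum over `range (p^μ)` when the character is nontrivial. -/
private lemma aux_sum_zero (p ν μ : ℕ) (hp : p.Prime) (f : ℤ → ℂ)
    (hmul : ∀ x y : ℤ, f (x + y) = f x * f y) (h0 : f 0 = 1)
    (hcong : ∀ x y : ℤ, (p : ℤ)^ν ∣ x - y → f x = f y)
    (m : ℤ) (hper : (p : ℤ)^ν ∣ m * (p : ℤ)^μ)
    (hnt : ¬ ∀ a : ℤ, f (m * a) = 1) :
    ∑ a ∈ Finset.range (p^μ), f (m * a) = 0 := by
  haveI : NeZero (p^μ) := ⟨pow_ne_zero _ hp.pos.ne'⟩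
  obtain ⟨d, hd⟩ := hper
  have hdvd : ∀ (z : ZMod (p^μ)) (b : ℤ), ((b : ZMod (p^μ)) = z) →
      (p : ℤ)^μ ∣ (z.val : ℤ) - b := by
    intro z b hb
    have h1 : (((z.val : ℤ) - b : ℤ) : ZMod (p^μ)) = 0 := by
      push_cast
      rw [ZMod.natCast_val, ZMod.cast_id, hb, sub_self]
    have h2 := (ZMod.intCast_zmod_eq_zero_iff_dvd _ _).mp h1
    exact_mod_cast h2
  have hstep : ∀ (b b' : ℤ), (p : ℤ)^μ ∣ b - b' → f (m * b) = f (m * b') := by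
    rintro b b' ⟨c, hc⟩
    refine hcong _ _ ⟨d * c, ?_⟩
    linear_combination m * hc + c * hd
  have hval : ∀ a : ℤ, f (m * (((a : ZMod (p^μ)).val : ℤ))) = f (m * a) := fun a =>
    hstep _ a (hdvd _ a rfl)
  set ψ : AddChar (ZMod (p^μ)) ℂ :=
    { toFun := fun x => f (m * (x.val : ℤ))
      map_zero_eq_one' := by simp [ZMod.val_zero, h0]
      map_add_eq_mul' := by
        intro x y
        show f (m * (((x + y).val : ℕ) : ℤ)) = f (m * ((x.val : ℕ) : ℤ)) * f (m * ((y.val : ℕ) : ℤ))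
        have h1 : f (m * (((x + y).val : ℕ) : ℤ)) = f (m * ((x.val : ℤ) + (y.val : ℤ))) := by
          refine hstep _ _ (hdvd (x + y) _ ?_)
          push_cast
          rw [ZMod.natCast_val, ZMod.natCast_val, ZMod.cast_id, ZMod.cast_id]
        rw [h1, mul_add, hmul] } with hψ
  have hsum : ∑ a ∈ Finset.range (p^μ), f (m * a) = ∑ x : ZMod (p^μ), ψ x := by
    rw [← aux_reindex (p^μ) (fun a => f (m * a))]
    rfl
  rw [hsum]
  refine AddChar.sum_eq_zero_of_ne_one ?_
  rw [AddChar.ne_one_iff]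
  push_neg at hnt
  obtain ⟨a, ha⟩ := hnt
  refine ⟨(a : ZMod (p^μ)), fun hone => ha ?_⟩
  have h3 : f (m * (((a : ZMod (p^μ)).val : ℕ) : ℤ)) = 1 := hone
  rw [← hval a]
  exact h3

/-- The character `a ↦ f (m * a)` is trivial iff `p^ν ∣ m`. -/
private lemma aux_trivial (p ν : ℕ) (hp : p.Prime) (hν : 1 ≤ ν) (f : ℤ → ℂ)
    (h0 : f 0 = 1)
    (hcong : ∀ x y : ℤ, (p : ℤ)^ν ∣ x - y → f x = f y)
    (hD : ∃ t : ℤ, f ((p : ℤ)^(ν-1) * t) ≠ 1)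
    (m : ℤ) :
    (∀ a : ℤ, f (m * a) = 1) ↔ (p : ℤ)^ν ∣ m := by
  constructor
  · intro h
    by_contra hnd
    have hm0 : m ≠ 0 := by rintro rfl; exact hnd (dvd_zero _)
    obtain ⟨k, m₀, hpm₀, habs⟩ :=
      Nat.exists_eq_pow_mul_and_not_dvd (Int.natAbs_ne_zero.mpr hm0) p hp.ne_one
    have hexists : ∃ m' : ℤ, ¬ (p : ℤ) ∣ m' ∧ m = (p : ℤ)^k * m' := by
      rcases m.natAbs_eq with hcase | hcase
      · exact ⟨(m₀ : ℤ), fun hh => hpm₀ (Int.ofNat_dvd.mp hh),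
          by rw [hcase, habs]; push_cast; ring⟩
      · exact ⟨-(m₀ : ℤ), fun hh => hpm₀ (Int.ofNat_dvd.mp ((dvd_neg).mp hh)),
          by rw [hcase, habs]; push_cast; ring⟩
    obtain ⟨m', hm', hfac⟩ := hexists
    have hkν : k < ν := by
      by_contra hk
      push_neg at hk
      exact hnd (hfac ▸ Dvd.dvd.mul_right (pow_dvd_pow (p : ℤ) hk) m')
    have hcop : IsCoprime ((p : ℤ)^ν) m' :=
      ((Nat.prime_iff_prime_int.mp hp).coprime_iff_not_dvd.mpr hm').pow_left
    obtain ⟨s, t, hst⟩ := hcop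
    obtain ⟨t₀, ht₀⟩ := hD
    apply ht₀
    have hpow : (p : ℤ)^k * (p : ℤ)^(ν-1-k) = (p : ℤ)^(ν-1) := by
      rw [← pow_add]; congr 1; omega
    have key : f (m * (t * (p : ℤ)^(ν-1-k) * t₀)) = f ((p : ℤ)^(ν-1) * t₀) := by
      refine hcong _ _ ⟨-((p : ℤ)^(ν-1) * t₀ * s), ?_⟩
      rw [hfac]
      linear_combination (t * t₀ * m') * hpow + ((p : ℤ)^(ν-1) * t₀) * hst
    rw [← key]
    exact h _
  · intro hd a
    obtain ⟨c, hc⟩ := hd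
    have : f (m * a) = f 0 := by
      refine hcong _ _ ⟨c * a, ?_⟩
      rw [hc]; ring
    rw [this, h0]

/-- Primitivity gives nontriviality at level `p^(γ-1)`. -/
private lemma aux_prim (p γ : ℕ) (hp : p.Prime) (hγ : 1 ≤ γ)
    (χ : DirichletCharacter ℂ (p ^ γ)) (hχ : χ.IsPrimitive) :
    ∃ t : ℤ, χ (((1 + t * (p : ℤ)^(γ-1)) : ℤ) : ZMod (p^γ)) ≠ 1 := by
  by_contra hcon
  push_neg at hcon
  haveI : NeZero (p^γ) := ⟨pow_ne_zero _ hp.pos.ne'⟩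
  have hd : p^(γ-1) ∣ p^γ := pow_dvd_pow p (Nat.sub_le γ 1)
  have hft : χ.FactorsThrough (p^(γ-1)) := by
    rw [DirichletCharacter.factorsThrough_iff_ker_unitsMap hd]
    intro x hx
    rw [MonoidHom.mem_ker] at hx ⊢
    have hx' : (ZMod.castHom hd (ZMod (p^(γ-1)))) ((x : ZMod (p^γ))) = 1 := by
      have := congrArg Units.val hx
      simpa [ZMod.unitsMap_def] using this
    have hdvd : ((p : ℤ))^(γ-1) ∣ (((x : ZMod (p^γ)).val : ℤ)) - 1 := by
      have h1 : ((((x : ZMod (p^γ)).val : ℤ) - 1 : ℤ) : ZMod (p^(γ-1))) = 0 := by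
        push_cast
        rw [ZMod.castHom_apply] at hx'
        rw [ZMod.natCast_val, hx', sub_self]
      have h2 := (ZMod.intCast_zmod_eq_zero_iff_dvd _ _).mp h1
      exact_mod_cast h2
    obtain ⟨t, ht⟩ := hdvd
    have hval : (((x : ZMod (p^γ)).val : ℤ)) = 1 + t * (p : ℤ)^(γ-1) := by linarith [ht]
    have hxeq : ((x : ZMod (p^γ))) = (((1 + t * (p : ℤ)^(γ-1)) : ℤ) : ZMod (p^γ)) := by
      rw [← hval]
      push_cast
      rw [ZMod.natCast_val, ZMod.cast_id]
    have hone : χ ((x : ZMod (p^γ))) = 1 := by rw [hxeq]; exact hcon t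
    exact Units.ext (by rw [MulChar.coe_toUnitHom, hone, Units.val_one])
  have hle : χ.conductor ≤ p^(γ-1) :=
    Nat.sInf_le ((DirichletCharacter.mem_conductorSet_iff _).mpr hft)
  have hlt : p^(γ-1) < p^γ := pow_lt_pow_right₀ hp.one_lt (by omega)
  rw [DirichletCharacter.IsPrimitive] at hχ
  omega

theorem stmt2 (p γ ν : ℕ) (hp : p.Prime) (hodd : Odd p) (hγ : 1 ≤ γ)
    (χ : DirichletCharacter ℂ (p ^ γ)) (hχ : χ.IsPrimitive)
    (hν1 : 1 ≤ ν) (hν2 : 2 * ν ≤ γ)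
    (u v w : ℤ) (huw : IsCoprime (u * w) (p : ℤ)) :
    ∑ a ∈ (Finset.range (p ^ ν)).filter (fun a => ¬ p ∣ a),
        χ (((u + v * w * (a : ℤ) * (p : ℤ) ^ (γ - ν)) : ℤ) : ZMod (p ^ γ))
      = if (p : ℤ) ^ ν ∣ v then
          χ ((u : ZMod (p ^ γ))) * ((p : ℂ) ^ (ν - 1) * ((p : ℂ) - 1))
        else if (p : ℤ) ^ (ν - 1) ∣ v then
          -(χ ((u : ZMod (p ^ γ))) * (p : ℂ) ^ (ν - 1))
        else 0 := by
  haveI : NeZero (p^γ) := ⟨pow_ne_zero _ hp.pos.ne'⟩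
  have hνγ : ν ≤ γ := by omega
  set f : ℤ → ℂ := fun x => χ (((1 + x * (p : ℤ)^(γ-ν)) : ℤ) : ZMod (p^γ)) with hf
  have hQQ : ∀ x y : ℤ, (((1 + x*(p:ℤ)^(γ-ν)) * (1 + y*(p:ℤ)^(γ-ν)) : ℤ) : ZMod (p^γ))
      = (((1 + (x+y)*(p:ℤ)^(γ-ν)) : ℤ) : ZMod (p^γ)) := by
    intro x y
    rw [ZMod.intCast_eq_intCast_iff, Int.modEq_iff_dvd]
    have hpow : (p:ℤ)^(γ-ν) * (p:ℤ)^(γ-ν) = (p:ℤ)^γ * (p:ℤ)^(γ-2*ν) := by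
      rw [← pow_add, ← pow_add]; congr 1; omega
    refine ⟨-(x*y*(p:ℤ)^(γ-2*ν)), ?_⟩
    push_cast
    linear_combination (-(x*y)) * hpow
  have hmul : ∀ x y : ℤ, f (x + y) = f x * f y := by
    intro x y
    simp only [hf]
    rw [← map_mul, ← Int.cast_mul, hQQ x y]
  have h0 : f 0 = 1 := by
    simp only [hf]
    norm_num
  have hcong : ∀ x y : ℤ, (p:ℤ)^ν ∣ x - y → f x = f y := by
    rintro x y ⟨c, hc⟩
    simp only [hf]
    congr 1
    rw [ZMod.intCast_eq_intCast_iff, Int.modEq_iff_dvd]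
    have hpow : (p:ℤ)^ν * (p:ℤ)^(γ-ν) = (p:ℤ)^γ := by
      rw [← pow_add]; congr 1; omega
    refine ⟨-c, ?_⟩
    push_cast
    linear_combination (-(p:ℤ)^(γ-ν)) * hc - c * hpow
  have hD : ∃ t : ℤ, f ((p:ℤ)^(ν-1) * t) ≠ 1 := by
    obtain ⟨t, ht⟩ := aux_prim p γ hp hγ χ hχ
    have hpow : (p:ℤ)^(ν-1) * (p:ℤ)^(γ-ν) = (p:ℤ)^(γ-1) := by
      rw [← pow_add]; congr 1; omega
    have heq : (1 + ((p:ℤ)^(ν-1)*t) * (p:ℤ)^(γ-ν)) = 1 + t * (p:ℤ)^(γ-1) := by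
      linear_combination t * hpow
    refine ⟨t, fun hcon => ht ?_⟩
    rw [← heq]
    exact hcon
  have hu : IsCoprime u (p:ℤ) := huw.of_mul_left_left
  have hw : IsCoprime w (p:ℤ) := huw.of_mul_left_right
  obtain ⟨u', t', hut⟩ := (hu.pow_right (n := γ) : IsCoprime u ((p:ℤ)^γ))
  have hu'p : IsCoprime u' (p:ℤ) :=
    (show IsCoprime u' ((p:ℤ)^γ) from ⟨u, t', by linear_combination hut⟩).of_isCoprime_of_dvd_right
      (dvd_pow_self (p:ℤ) (by omega : γ ≠ 0))
  set c : ℤ := u' * (v * w) with hcdef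
  have hterm : ∀ a : ℕ, χ (((u + v * w * (a:ℤ) * (p:ℤ)^(γ-ν)) : ℤ) : ZMod (p^γ))
      = χ ((u : ZMod (p^γ))) * f (c * (a:ℤ)) := by
    intro a
    simp only [hf]
    rw [← map_mul, ← Int.cast_mul]
    congr 1
    rw [ZMod.intCast_eq_intCast_iff, Int.modEq_iff_dvd]
    refine ⟨-(t' * (v * w) * (a:ℤ) * (p:ℤ)^(γ-ν)), ?_⟩
    rw [hcdef]
    push_cast
    linear_combination ((v*w) * (a:ℤ) * (p:ℤ)^(γ-ν)) * hut
  have hppow : (p:ℤ)^ν = (p:ℤ)^(ν-1) * p := by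
    rw [← pow_succ]; congr 1; omega
  have hsplit : ∑ a ∈ (Finset.range (p^ν)).filter (fun a => ¬ p ∣ a), f (c * (a:ℤ))
      = (∑ a ∈ Finset.range (p^ν), f (c * (a:ℤ)))
        - ∑ b ∈ Finset.range (p^(ν-1)), f ((c * p) * (b:ℤ)) := by
    have hpp : p^ν = p * p^(ν-1) := by
      rw [← pow_succ']; congr 1; omega
    have h1 := Finset.sum_filter_add_sum_filter_not (Finset.range (p^ν)) (fun a => p ∣ a)
      (fun a => f (c * (a:ℤ)))
    have himg : (Finset.range (p^ν)).filter (fun a => p ∣ a)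
        = Finset.image (fun b => p * b) (Finset.range (p^(ν-1))) := by
      ext a
      simp only [Finset.mem_filter, Finset.mem_range, Finset.mem_image]
      constructor
      · rintro ⟨ha, b, rfl⟩
        refine ⟨b, ?_, rfl⟩
        rw [hpp] at ha
        exact Nat.lt_of_mul_lt_mul_left ha
      · rintro ⟨b, hb, rfl⟩
        refine ⟨?_, ⟨b, rfl⟩⟩
        rw [hpp]
        exact (Nat.mul_lt_mul_left hp.pos).mpr hb
    have h2 : ∑ a ∈ (Finset.range (p^ν)).filter (fun a => p ∣ a), f (c * (a:ℤ))
        = ∑ b ∈ Finset.range (p^(ν-1)), f ((c * p) * (b:ℤ)) := by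
      rw [himg, Finset.sum_image (fun x _ y _ h => Nat.eq_of_mul_eq_mul_left hp.pos h)]
      refine Finset.sum_congr rfl fun b _ => ?_
      congr 1
      push_cast
      ring
    rw [h2] at h1
    linear_combination h1
  have hT1 := aux_trivial p ν hp hν1 f h0 hcong hD c
  have hT2 := aux_trivial p ν hp hν1 f h0 hcong hD (c * p)
  have hc1 : ((p:ℤ)^ν ∣ c) ↔ ((p:ℤ)^ν ∣ v) := by
    have hcop2 : IsCoprime ((p:ℤ)^ν) (u' * w) := (hu'p.symm.mul_right hw.symm).pow_left
    constructor
    · intro h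
      refine hcop2.dvd_of_dvd_mul_left ?_
      rwa [show (u'*w)*v = c from by rw [hcdef]; ring]
    · intro h
      rw [hcdef, show u'*(v*w) = (u'*w)*v from by ring]
      exact h.mul_left _
  have hc2 : ((p:ℤ)^ν ∣ c * p) ↔ ((p:ℤ)^(ν-1) ∣ v) := by
    have hstep1 : ((p:ℤ)^ν ∣ c * p) ↔ ((p:ℤ)^(ν-1) ∣ c) := by
      rw [hppow]
      exact mul_dvd_mul_iff_right (by exact_mod_cast hp.ne_zero : (p:ℤ) ≠ 0)
    rw [hstep1]
    have hcop3 : IsCoprime ((p:ℤ)^(ν-1)) (u' * w) := (hu'p.symm.mul_right hw.symm).pow_left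
    constructor
    · intro h
      refine hcop3.dvd_of_dvd_mul_left ?_
      rwa [show (u'*w)*v = c from by rw [hcdef]; ring]
    · intro h
      rw [hcdef, show u'*(v*w) = (u'*w)*v from by ring]
      exact h.mul_left _
  have hper1 : (p:ℤ)^ν ∣ c * (p:ℤ)^ν := dvd_mul_left _ _
  have hper2 : (p:ℤ)^ν ∣ (c * p) * (p:ℤ)^(ν-1) := ⟨c, by linear_combination (-c) * hppow⟩
  have hmain : ∑ a ∈ (Finset.range (p ^ ν)).filter (fun a => ¬ p ∣ a),
        χ (((u + v * w * (a : ℤ) * (p : ℤ) ^ (γ - ν)) : ℤ) : ZMod (p ^ γ))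
      = χ ((u : ZMod (p^γ))) * ((∑ a ∈ Finset.range (p^ν), f (c * (a:ℤ)))
        - ∑ b ∈ Finset.range (p^(ν-1)), f ((c * p) * (b:ℤ))) := by
    rw [← hsplit, Finset.mul_sum]
    exact Finset.sum_congr rfl fun a _ => hterm a
  rw [hmain]
  by_cases h1 : (p:ℤ)^ν ∣ v
  · have h2 : (p:ℤ)^(ν-1) ∣ v := dvd_trans (pow_dvd_pow _ (by omega)) h1
    rw [if_pos h1]
    rw [aux_sum_triv p ν ν hp f hcong c hper1 (hT1.mpr (hc1.mpr h1)),
      aux_sum_triv p ν (ν-1) hp f hcong (c*p) hper2 (hT2.mpr (hc2.mpr h2))]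
    have hCpow : (p:ℂ)^ν = (p:ℂ)^(ν-1) * p := by
      rw [← pow_succ]; congr 1; omega
    rw [hCpow]
    ring
  · rw [if_neg h1]
    rw [aux_sum_zero p ν ν hp f hmul h0 hcong c hper1
      (fun hcon => h1 (hc1.mp (hT1.mp hcon)))]
    by_cases h2 : (p:ℤ)^(ν-1) ∣ v
    · rw [if_pos h2]
      rw [aux_sum_triv p ν (ν-1) hp f hcong (c*p) hper2 (hT2.mpr (hc2.mpr h2))]
      ring
    · rw [if_neg h2]
      rw [aux_sum_zero p ν (ν-1) hp f hmul h0 hcong (c*p) hper2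
        (fun hcon => h2 (hc2.mp (hT2.mp hcon)))]
      ring
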